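/- Every prefix of the Thue-Morse word has a string attractor of size at most 4. -/

import Mathlib

def IsAttractor {α : Type*} (w : ℕ → α) (n : ℕ) (S : Finset ℕ) : Prop :=
  (∀ s ∈ S, s < n) ∧
  ∀ i j : ℕ, i ≤ j → j < n →
    ∃ i' j' : ℕ, i' ≤ j' ∧ j' < n ∧ j' - i' = j - i ∧
      (∀ t, t ≤ j - i → w (i' + t) = w (i + t)) ∧
      ∃ s ∈ S, i' ≤ s ∧ s ≤ j'

def tmStep : ℕ → List ℕ
  | 0 => [0, 1]
  | _ => [1, 0]

def tmIter : ℕ → List ℕ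
  | 0 => [0]
  | k + 1 => (tmIter k).flatMap tmStep

/-- The Thue-Morse word: fixed point, starting with 0, of 0 → 01, 1 → 10. -/
def tm (n : ℕ) : ℕ := (tmIter (n + 1)).getD n 0

def tmbA : ℕ → ℕ → ℕ
  | 0, _ => 0
  | f+1, n => if n = 0 then 0 else (tmbA f (n/2) + n % 2) % 2

def tmb (n : ℕ) : ℕ := tmbA n n

lemma tmbA_zero (f : ℕ) : tmbA f 0 = 0 := by cases f <;> simp [tmbA]

lemma tmbA_congr : ∀ n f g : ℕ, n ≤ f → n ≤ g → tmbA f n = tmbA g n := by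
  intro n
  induction n using Nat.strong_induction_on with
  | _ n IH =>
    intro f g hf hg
    rcases Nat.eq_zero_or_pos n with h0 | h0
    · subst h0; rw [tmbA_zero, tmbA_zero]
    · obtain ⟨f', rfl⟩ : ∃ f', f = f' + 1 := ⟨f - 1, by omega⟩
      obtain ⟨g', rfl⟩ : ∃ g', g = g' + 1 := ⟨g - 1, by omega⟩
      simp only [tmbA, if_neg (by omega : ¬ n = 0)]
      rw [IH (n/2) (by omega) f' g' (by omega) (by omega)]

lemma tmb_le_one (n : ℕ) : tmb n ≤ 1 := by
  cases n with
  | zero => simp [tmb, tmbA]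
  | succ m => simp only [tmb, tmbA]; split <;> omega

lemma tmb_even (n : ℕ) : tmb (2 * n) = tmb n := by
  rcases Nat.eq_zero_or_pos n with h0 | h0
  · subst h0; rfl
  · obtain ⟨m, hm⟩ : ∃ m, 2 * n = m + 1 := ⟨2 * n - 1, by omega⟩
    have h1 : tmb (2 * n) = (tmbA m n + 0) % 2 := by
      rw [tmb, hm]
      simp only [tmbA, if_neg (by omega : ¬ m + 1 = 0)]
      rw [show (m+1)/2 = n from by omega, show (m+1) % 2 = 0 from by omega]
    rw [h1, tmbA_congr n m n (by omega) le_rfl]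
    have := tmb_le_one n
    simp only [tmb] at *
    omega

lemma tmb_odd (n : ℕ) : tmb (2 * n + 1) = 1 - tmb n := by
  have h1 : tmb (2 * n + 1) = (tmbA (2 * n) n + 1) % 2 := by
    simp only [tmb, tmbA, if_neg (by omega : ¬ 2 * n + 1 = 0)]
    rw [show (2*n+1)/2 = n from by omega, show (2*n+1) % 2 = 1 from by omega]
  rw [h1, tmbA_congr n (2*n) n (by omega) le_rfl]
  have := tmb_le_one n
  simp only [tmb] at *
  omega

lemma flat_range : ∀ N : ℕ, ((List.range N).map tmb).flatMap tmStep = (List.range (2 * N)).map tmb := by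
  intro N
  induction N with
  | zero => rfl
  | succ N IH =>
    rw [List.range_succ, List.map_append, List.flatMap_append, IH,
        show 2 * (N + 1) = (2 * N + 1) + 1 from by ring,
        List.range_succ, List.range_succ, List.map_append, List.map_append,
        List.append_assoc]
    congr 1
    have he := tmb_even N
    have ho := tmb_odd N
    rcases (by have := tmb_le_one N; omega : tmb N = 0 ∨ tmb N = 1) with h | h <;>
      simp [h, tmStep, he, ho]

lemma tmIter_eq (k : ℕ) : tmIter k = (List.range (2 ^ k)).map tmb := by
  induction k with
  | zero => rfl
  | succ k IH =>
    show (tmIter k).flatMap tmStep = _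
    rw [IH, flat_range, show (2:ℕ) ^ (k+1) = 2 * 2 ^ k from by rw [pow_succ]; ring]

lemma tm_eq_tmb (n : ℕ) : tm n = tmb n := by
  have hn : n < 2 ^ (n + 1) := by
    calc n < 2 ^ n := (Nat.lt_two_pow_self (n := n))
    _ < 2 ^ (n+1) := Nat.pow_lt_pow_right (by norm_num) (Nat.lt_succ_self n)
  rw [tm, tmIter_eq]
  rw [List.getD_eq_getElem _ _ (by simpa using hn)]
  simp

lemma tm_even (n : ℕ) : tm (2 * n) = tm n := by rw [tm_eq_tmb, tm_eq_tmb, tmb_even]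
lemma tm_odd (n : ℕ) : tm (2 * n + 1) = 1 - tm n := by rw [tm_eq_tmb, tm_eq_tmb, tmb_odd]
lemma tm_le_one (n : ℕ) : tm n ≤ 1 := by rw [tm_eq_tmb]; exact tmb_le_one n

def Q (n : ℕ) (S : Finset ℕ) : Prop :=
  (∀ s ∈ S, 1 ≤ s ∧ s < n) ∧
  (∀ a b : ℕ, a ≤ 1 → b ≤ 1 → ∃ s ∈ S, tm (s - 1) = a ∧ tm s = b) ∧
  (∀ i j : ℕ, i ≤ j → j < n →
    ∃ i' j' s : ℕ, i' ≤ j' ∧ j' < n ∧ j' - i' = j - i ∧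
      (∀ t, t ≤ j - i → tm (i' + t) = tm (i + t)) ∧
      s ∈ S ∧ i' ≤ s ∧ s ≤ j' ∧ (i < j → i' < s))

theorem master (m : ℕ) (S : Finset ℕ)
    (h1 : Q ((m + 1) / 2) S) (h2 : m % 2 = 1 → Q (m / 2) S) :
    Q m (S.image (fun s => 2 * s)) := by
  obtain ⟨ha1, hb1, hc1⟩ := h1
  refine ⟨?_, ?_, ?_⟩
  · intro s' hs'
    rw [Finset.mem_image] at hs'
    obtain ⟨s, hs, rfl⟩ := hs'
    have := ha1 s hs; omega
  · intro a b haa hbb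
    obtain ⟨s, hs, hp1, hp2⟩ := hb1 (1 - a) b (by omega) hbb
    have hs1 := ha1 s hs
    refine ⟨2 * s, Finset.mem_image_of_mem _ hs, ?_, ?_⟩
    · rw [show 2 * s - 1 = 2 * (s - 1) + 1 from by omega, tm_odd, hp1]; omega
    · rw [tm_even, hp2]
  · intro i j hij hjm
    by_cases hij' : i = j
    · subst hij'
      obtain ⟨s, hs, _, hp2⟩ := hb1 0 (tm i) (by omega) (tm_le_one i)
      have hs1 := ha1 s hs
      refine ⟨2 * s, 2 * s, 2 * s, le_rfl, by omega, by omega, ?_,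
        Finset.mem_image_of_mem _ hs, le_rfl, le_rfl, by omega⟩
      intro t ht
      rw [show t = 0 from by omega]
      simpa [tm_even] using hp2
    · have hlt : i < j := lt_of_le_of_ne hij hij'
      by_cases h2e : i % 2 = 0 ∧ j = i + 1
      · obtain ⟨hie, rfl⟩ := h2e
        obtain ⟨q, rfl⟩ : ∃ q, i = 2 * q := ⟨i / 2, by omega⟩
        have hxq := tm_le_one q
        obtain ⟨s, hs, hp1, hp2⟩ := hb1 (1 - tm q) (1 - tm q) (by omega) (by omega)
        have hs1 := ha1 s hs
        have htm1 := tm_le_one (s - 1)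
        refine ⟨2 * s - 1, 2 * s, 2 * s, by omega, by omega, by omega, ?_,
          Finset.mem_image_of_mem _ hs, by omega, by omega, by omega⟩
        intro t ht
        have ht1 : t = 0 ∨ t = 1 := by omega
        rcases ht1 with rfl | rfl
        · rw [show 2 * s - 1 + 0 = 2 * (s - 1) + 1 from by omega, tm_odd,
              show 2 * q + 0 = 2 * q from by omega, tm_even]
          omega
        · rw [show 2 * s - 1 + 1 = 2 * s from by omega, tm_even, tm_odd, hp2]
      · have hq01 : i / 2 < j / 2 := by omega
        have key : ∃ a b s : ℕ, a ≤ b ∧ 2 * b + j % 2 < m ∧ b - a = j / 2 - i / 2 ∧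
            (∀ t, t ≤ j / 2 - i / 2 → tm (a + t) = tm (i / 2 + t)) ∧
            s ∈ S ∧ a < s ∧ s ≤ b := by
          by_cases hodd : j % 2 = 1 ∧ m % 2 = 1
          · obtain ⟨haQ, hbQ, hcQ⟩ := h2 hodd.2
            obtain ⟨a, b, s, hab, hbm, hblen, hbmatch, hsS, has, hsb, hstrict⟩ :=
              hcQ (i / 2) (j / 2) (by omega) (by omega)
            exact ⟨a, b, s, hab, by omega, hblen, hbmatch, hsS, hstrict hq01, hsb⟩
          · obtain ⟨a, b, s, hab, hbm, hblen, hbmatch, hsS, has, hsb, hstrict⟩ :=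
              hc1 (i / 2) (j / 2) (by omega) (by omega)
            exact ⟨a, b, s, hab, by omega, hblen, hbmatch, hsS, hstrict hq01, hsb⟩
        obtain ⟨a, b, s, hab, hbm, hblen, hbmatch, hsS, has, hsb⟩ := key
        refine ⟨2 * a + i % 2, 2 * a + i % 2 + (j - i), 2 * s, by omega, by omega, by omega,
          ?_, Finset.mem_image_of_mem _ hsS, by omega, by omega, by omega⟩
        intro t ht
        have hee : (i % 2 + t) / 2 ≤ j / 2 - i / 2 := by omega
        have hm := hbmatch ((i % 2 + t) / 2) hee
        rw [show 2 * a + i % 2 + t = 2 * (a + (i % 2 + t) / 2) + (i % 2 + t) % 2 from by omega,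
            show i + t = 2 * (i / 2 + (i % 2 + t) / 2) + (i % 2 + t) % 2 from by omega]
        rcases Nat.mod_two_eq_zero_or_one (i % 2 + t) with h | h <;> rw [h]
        · rw [Nat.add_zero, Nat.add_zero, tm_even, tm_even, hm]
        · rw [tm_odd, tm_odd, hm]

def sliceEq (a i l : ℕ) : Bool := (List.range l).all fun d => tmb (a + d) == tmb (i + d)

lemma sliceEq_sound {a i l : ℕ} (h : sliceEq a i l = true) :
    ∀ t, t < l → tm (a + t) = tm (i + t) := by
  intro t ht
  have := List.all_eq_true.mp h t (List.mem_range.mpr ht)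
  rw [tm_eq_tmb, tm_eq_tmb]
  simpa using this

def checkQa (n : ℕ) (S : List ℕ) : Bool := S.all fun s => decide (1 ≤ s) && decide (s < n)

def checkQb (S : List ℕ) : Bool :=
  (List.range 2).all fun a => (List.range 2).all fun b =>
    S.any fun s => (tmb (s - 1) == a) && (tmb s == b)

def checkQc (n : ℕ) (S : List ℕ) : Bool :=
  (List.range n).all fun i => (List.range n).all fun j =>
    if i ≤ j then
      if i = j then S.any fun s => decide (s < n) && (tmb s == tmb i)
      else S.any fun s => (List.range (j - i)).any fun d =>
        decide (d + 1 ≤ s) && decide (s - 1 - d + (j - i) < n) &&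
          sliceEq (s - 1 - d) i (j - i + 1)
    else true

lemma Q_of_checks (n : ℕ) (S : List ℕ)
    (h : (checkQa n S && (checkQb S && checkQc n S)) = true) : Q n S.toFinset := by
  rw [Bool.and_eq_true, Bool.and_eq_true] at h
  obtain ⟨ha, hb, hc⟩ := h
  refine ⟨?_, ?_, ?_⟩
  · intro s hs
    rw [List.mem_toFinset] at hs
    have := List.all_eq_true.mp ha s hs
    simp at this
    omega
  · intro a b haa hbb
    have h1 := List.all_eq_true.mp hb a (List.mem_range.mpr (by omega))
    have h2 := List.all_eq_true.mp h1 b (List.mem_range.mpr (by omega))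
    obtain ⟨s, hsmem, hs⟩ := List.any_eq_true.mp h2
    simp at hs
    exact ⟨s, List.mem_toFinset.mpr hsmem, by rw [tm_eq_tmb, hs.1], by rw [tm_eq_tmb, hs.2]⟩
  · intro i j hij hjn
    have h1 := List.all_eq_true.mp hc i (List.mem_range.mpr (lt_of_le_of_lt hij hjn))
    have h2 := List.all_eq_true.mp h1 j (List.mem_range.mpr hjn)
    rw [if_pos hij] at h2
    by_cases hij' : i = j
    · subst hij'
      rw [if_pos rfl] at h2
      obtain ⟨s, hsmem, hs⟩ := List.any_eq_true.mp h2
      simp at hs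
      refine ⟨s, s, s, le_rfl, hs.1, by omega, ?_, List.mem_toFinset.mpr hsmem,
        le_rfl, le_rfl, by omega⟩
      intro t ht
      rw [show t = 0 from by omega]
      simp only [Nat.add_zero]
      rw [tm_eq_tmb, tm_eq_tmb, hs.2]
    · rw [if_neg hij'] at h2
      obtain ⟨s, hsmem, hs⟩ := List.any_eq_true.mp h2
      obtain ⟨d, hdmem, hd⟩ := List.any_eq_true.mp hs
      rw [List.mem_range] at hdmem
      rw [Bool.and_eq_true, Bool.and_eq_true] at hd
      obtain ⟨⟨hd1, hd2⟩, hd3⟩ := hd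
      rw [decide_eq_true_iff] at hd1 hd2
      refine ⟨s - 1 - d, s - 1 - d + (j - i), s, Nat.le_add_right _ _, hd2, by omega,
        ?_, List.mem_toFinset.mpr hsmem, by omega, by omega, fun _ => by omega⟩
      intro t ht
      exact sliceEq_sound hd3 t (by omega)

def checkAtt (n : ℕ) (S : List ℕ) : Bool :=
  (S.all fun s => decide (s < n)) &&
  ((List.range n).all fun i => (List.range n).all fun j =>
    if i ≤ j then
      S.any fun s => (List.range (j - i + 1)).any fun d =>
        decide (s - d + (j - i) < n) && decide (s ≤ s - d + (j - i)) &&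
          sliceEq (s - d) i (j - i + 1)
    else true)

lemma att_of_check {n : ℕ} {S : List ℕ} (h : checkAtt n S = true) :
    IsAttractor tm n S.toFinset := by
  rw [checkAtt, Bool.and_eq_true] at h
  obtain ⟨ha, hc⟩ := h
  refine ⟨?_, ?_⟩
  · intro s hs
    rw [List.mem_toFinset] at hs
    have := List.all_eq_true.mp ha s hs
    simpa using this
  · intro i j hij hjn
    have h1 := List.all_eq_true.mp hc i (List.mem_range.mpr (lt_of_le_of_lt hij hjn))
    have h2 := List.all_eq_true.mp h1 j (List.mem_range.mpr hjn)
    rw [if_pos hij] at h2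
    obtain ⟨s, hsmem, hs⟩ := List.any_eq_true.mp h2
    obtain ⟨d, _, hd⟩ := List.any_eq_true.mp hs
    rw [Bool.and_eq_true, Bool.and_eq_true] at hd
    obtain ⟨⟨hd1, hd2⟩, hd3⟩ := hd
    rw [decide_eq_true_iff] at hd1 hd2
    refine ⟨s - d, s - d + (j - i), Nat.le_add_right _ _, hd1, by omega, ?_,
      s, List.mem_toFinset.mpr hsmem, by omega, hd2⟩
    intro t ht
    exact sliceEq_sound hd3 t (by omega)

lemma baseA : ∀ m, 7 ≤ m → m ≤ 10 → Q m ([2,3,4,6] : List ℕ).toFinset := by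
  intro m h1 h2
  interval_cases m <;> exact Q_of_checks _ _ (by decide)

lemma baseC : ∀ m, 10 ≤ m → m ≤ 12 → Q m ([4,5,6,8] : List ℕ).toFinset := by
  intro m h1 h2
  interval_cases m <;> exact Q_of_checks _ _ (by decide)

lemma baseD : ∀ m, 12 ≤ m → m ≤ 13 → Q m ([4,5,8,10] : List ℕ).toFinset := by
  intro m h1 h2
  interval_cases m <;> exact Q_of_checks _ _ (by decide)

lemma baseE : ∀ m, 13 ≤ m → m ≤ 14 → Q m ([4,6,8,12] : List ℕ).toFinset := by
  intro m h1 h2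
  interval_cases m <;> exact Q_of_checks _ _ (by decide)

lemma famStep (S : Finset ℕ) (c d : ℕ) (base : ∀ m, c ≤ m → m ≤ d → Q m S) :
    ∀ j n, c * 2 ^ j ≤ n → n ≤ d * 2 ^ j → Q n (S.image (fun s => 2 ^ j * s)) := by
  intro j
  induction j with
  | zero =>
    intro n h1 h2
    have e : S.image (fun s => 2 ^ 0 * s) = S := by
      simp only [pow_zero, one_mul]
      exact Finset.image_id
    rw [e]
    exact base n (by simpa using h1) (by simpa using h2)
  | succ j IH =>
    intro n h1 h2
    have hp : (2:ℕ) ^ (j + 1) = 2 ^ j * 2 := pow_succ 2 j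
    have e : S.image (fun s => 2 ^ (j+1) * s)
        = (S.image (fun s => 2 ^ j * s)).image (fun s => 2 * s) := by
      rw [Finset.image_image]
      congr 1
      funext s
      simp only [Function.comp_apply]
      rw [hp]; ring
    rw [e]
    have e1 : c * 2 ^ (j + 1) = 2 * (c * 2 ^ j) := by rw [hp]; ring
    have e2 : d * 2 ^ (j + 1) = 2 * (d * 2 ^ j) := by rw [hp]; ring
    exact master n _ (IH ((n + 1) / 2) (by omega) (by omega))
      (fun _ => IH (n / 2) (by omega) (by omega))

lemma cov : ∀ n, 7 ≤ n → ∃ j : ℕ, 7 * 2 ^ j ≤ n ∧ n ≤ 14 * 2 ^ j := by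
  intro n
  induction n using Nat.strong_induction_on with
  | _ n IH =>
    intro h7
    by_cases h14 : n ≤ 14
    · exact ⟨0, by simpa using h7, by simpa using h14⟩
    · obtain ⟨j, hj1, hj2⟩ := IH (n / 2) (by omega) (by omega)
      have hpos : 0 < 2 ^ j := Nat.two_pow_pos j
      have hp1 : (2:ℕ) ^ (j + 1) = 2 ^ j * 2 := pow_succ 2 j
      have hp2 : (2:ℕ) ^ (j + 2) = 2 ^ (j + 1) * 2 := pow_succ 2 (j + 1)
      by_cases he : n ≤ 28 * 2 ^ j
      · exact ⟨j + 1, by omega, by omega⟩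
      · exact ⟨j + 2, by omega, by omega⟩

lemma isAttractor_of_Q {n : ℕ} {S : Finset ℕ} (h : Q n S) : IsAttractor tm n S := by
  refine ⟨fun s hs => (h.1 s hs).2, ?_⟩
  intro i j hij hjn
  obtain ⟨i', j', s, h1, h2, h3, h4, h5, h6, h7, _⟩ := h.2.2 i j hij hjn
  exact ⟨i', j', h1, h2, h3, h4, s, h5, h6, h7⟩

/-- Every prefix of the Thue-Morse word has a string attractor of size at most 4. -/
theorem tm_attractor_le_four :
    ∀ n : ℕ, ∃ S : Finset ℕ, IsAttractor tm n S ∧ S.card ≤ 4 := by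
  intro n
  by_cases h7 : n < 7
  · interval_cases n
    · exact ⟨∅, ⟨fun s hs => absurd hs (Finset.notMem_empty s),
        fun i j hij hjn => absurd hjn (by omega)⟩, by simp⟩
    · exact ⟨_, att_of_check (n := 1) (S := [0]) (by decide), by decide⟩
    · exact ⟨_, att_of_check (n := 2) (S := [0,1]) (by decide), by decide⟩
    · exact ⟨_, att_of_check (n := 3) (S := [0,1]) (by decide), by decide⟩
    · exact ⟨_, att_of_check (n := 4) (S := [0,2]) (by decide), by decide⟩
    · exact ⟨_, att_of_check (n := 5) (S := [0,2]) (by decide), by decide⟩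
    · exact ⟨_, att_of_check (n := 6) (S := [1,3]) (by decide), by decide⟩
  · push_neg at h7
    obtain ⟨j, hj1, hj2⟩ := cov n h7
    have hcard : ∀ (L : List ℕ), L.length ≤ 4 →
        ((L.toFinset).image (fun s => 2 ^ j * s)).card ≤ 4 :=
      fun L hL => le_trans Finset.card_image_le (le_trans (List.toFinset_card_le _) hL)
    rcases le_or_gt n (10 * 2 ^ j) with hr | hr
    · exact ⟨_, isAttractor_of_Q (famStep _ 7 10 baseA j n hj1 hr), hcard _ (by norm_num)⟩
    · rcases le_or_gt n (12 * 2 ^ j) with hr2 | hr2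
      · exact ⟨_, isAttractor_of_Q (famStep _ 10 12 baseC j n (by omega) hr2),
          hcard _ (by norm_num)⟩
      · rcases le_or_gt n (13 * 2 ^ j) with hr3 | hr3
        · exact ⟨_, isAttractor_of_Q (famStep _ 12 13 baseD j n (by omega) hr3),
            hcard _ (by norm_num)⟩
        · exact ⟨_, isAttractor_of_Q (famStep _ 13 14 baseE j n (by omega) hj2),
            hcard _ (by norm_num)⟩
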